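/- Let x*_1 ≤ … ≤ x*_n be the sorted elements of a multiset X of size n, and let y*_1 ≤ … ≤ y*_s be the sorted elements of a uniformly random s-element subset S of X. Suppose −g < κs ≤ s + g, 1 ≤ s ≤ n, g ≥ 0, and let ī := max{1, min(⌈κs⌉, s)} and j̄_r := min{⌈κn + gn/s⌉, n}. If ī ≤ ⌈κs⌉, then P[x*_{j̄_r} < y*_ī] ≤ exp(−2g²/s). -/

import Mathlib

open MeasureTheory

/-- The `i`-th smallest (1-indexed) element of a multiset of reals. -/
noncomputable def kthSmallest (m : Multiset ℝ) (i : ℕ) : ℝ :=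
  (m.sort (· ≤ ·)).getD (i - 1) 0

open Finset Real
open scoped ENNReal NNReal

lemma descFactorial_mul_pow_le (n K m : ℕ) (hK : K ≤ n) :
    K.descFactorial m * n ^ m ≤ n.descFactorial m * K ^ m := by
  induction m with
  | zero => simp
  | succ m ih =>
    rw [Nat.descFactorial_succ, Nat.descFactorial_succ, pow_succ, pow_succ]
    have key : (K - m) * n ≤ (n - m) * K := by
      have h1 : m * K ≤ m * n := Nat.mul_le_mul_left _ hK
      rw [Nat.sub_mul, Nat.sub_mul, mul_comm K n]
      omega
    calc (K - m) * K.descFactorial m * (n ^ m * n)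
        = ((K - m) * n) * (K.descFactorial m * n ^ m) := by ring
      _ ≤ ((n - m) * K) * (n.descFactorial m * K ^ m) := Nat.mul_le_mul key ih
      _ = (n - m) * n.descFactorial m * (K ^ m * K) := by ring

lemma choose_pow_le (n K m : ℕ) (hK : K ≤ n) :
    K.choose m * n ^ m ≤ n.choose m * K ^ m := by
  have h := descFactorial_mul_pow_le n K m hK
  rw [Nat.descFactorial_eq_factorial_mul_choose, Nat.descFactorial_eq_factorial_mul_choose] at h
  have := Nat.factorial_pos m
  calc K.choose m * n ^ m = (m.factorial * (K.choose m * n ^ m)) / m.factorial := by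
        rw [Nat.mul_div_cancel_left _ this]
    _ ≤ (m.factorial * (n.choose m * K ^ m)) / m.factorial := by
        apply Nat.div_le_div_right
        calc m.factorial * (K.choose m * n ^ m) = m.factorial * K.choose m * n ^ m := by ring
          _ ≤ m.factorial * n.choose m * K ^ m := h
          _ = m.factorial * (n.choose m * K ^ m) := by ring
    _ = n.choose m * K ^ m := Nat.mul_div_cancel_left _ this

lemma coeff_ineq (n K s m : ℕ) (hK : K ≤ n) (hm : m ≤ s) (hs : s ≤ n) :
    n ^ s * (K.choose m * (n - m).choose (s - m)) ≤
      n.choose s * (s.choose m * (K ^ m * n ^ (s - m))) := by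
  have h1 : n.choose s * s.choose m = n.choose m * (n - m).choose (s - m) :=
    Nat.choose_mul hm
  have h2 : n ^ s = n ^ m * n ^ (s - m) := by rw [← pow_add]; congr 1; omega
  calc n ^ s * (K.choose m * (n - m).choose (s - m))
      = (K.choose m * n ^ m) * ((n - m).choose (s - m) * n ^ (s - m)) := by rw [h2]; ring
    _ ≤ (n.choose m * K ^ m) * ((n - m).choose (s - m) * n ^ (s - m)) :=
        Nat.mul_le_mul_right _ (choose_pow_le n K m hK)
    _ = (n.choose m * (n - m).choose (s - m)) * (K ^ m * n ^ (s - m)) := by ring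
    _ = n.choose s * (s.choose m * (K ^ m * n ^ (s - m))) := by rw [← h1]; ring

lemma choose_mul' (K k m : ℕ) (hm : m ≤ k) :
    K.choose k * k.choose m = K.choose m * (K - m).choose (k - m) := by
  rcases Nat.le_total k K with h | h
  · exact Nat.choose_mul hm
  · rcases Nat.eq_or_lt_of_le h with h | h
    · subst h; exact Nat.choose_mul hm
    · rcases Nat.le_total m K with h2 | h2
      · rw [Nat.choose_eq_zero_of_lt h, Nat.choose_eq_zero_of_lt (by omega : K - m < k - m)]
        ring
      · rcases Nat.eq_or_lt_of_le h2 with h2 | h2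
        · subst h2; rw [Nat.choose_eq_zero_of_lt h, Nat.sub_self,
            Nat.choose_eq_zero_of_lt (by omega : 0 < k - K)]
          ring
        · rw [Nat.choose_eq_zero_of_lt h, Nat.choose_eq_zero_of_lt h2]; ring

lemma sum_identity (n K s m : ℕ) (hK : K ≤ n) (hm : m ≤ s) :
    ∑ k ∈ range (s + 1), K.choose k * (n - K).choose (s - k) * k.choose m
      = K.choose m * (n - m).choose (s - m) := by
  rcases Nat.lt_or_ge K m with hKm | hKm
  · rw [Nat.choose_eq_zero_of_lt hKm, Finset.sum_eq_zero, Nat.zero_mul]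
    intro k hk
    rcases Nat.lt_or_ge k m with h | h
    · rw [Nat.choose_eq_zero_of_lt h]; ring
    · rw [Nat.choose_eq_zero_of_lt (by omega : K < k)]; ring
  · have step1 : ∑ k ∈ range (s + 1), K.choose k * (n - K).choose (s - k) * k.choose m
        = ∑ k ∈ Ico m (s + 1), K.choose k * (n - K).choose (s - k) * k.choose m := by
      apply (Finset.sum_subset (by intro k hk; simp at *; omega) ?_).symm
      intro k _ hk
      simp only [Finset.mem_Ico, Finset.mem_range] at *
      rw [Nat.choose_eq_zero_of_lt (by omega : k < m)]; ring
    rw [step1, Finset.sum_Ico_eq_sum_range]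
    have hrange : s + 1 - m = (s - m) + 1 := by omega
    have hvdm : (n - m).choose (s - m) =
        ∑ k ∈ range ((s - m) + 1), (K - m).choose k * (n - K).choose ((s - m) - k) := by
      have : n - m = (K - m) + (n - K) := by omega
      rw [this, Nat.add_choose_eq, Finset.Nat.sum_antidiagonal_eq_sum_range_succ_mk]
    rw [hvdm, hrange, Finset.mul_sum]
    apply Finset.sum_congr rfl
    intro t ht
    simp only [Finset.mem_range] at ht
    have h1 : K.choose (m + t) * (m + t).choose m = K.choose m * (K - m).choose t := by
      rw [choose_mul' K (m + t) m (by omega)]; congr 2; omega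
    have h2 : s - (m + t) = (s - m) - t := by omega
    calc K.choose (m + t) * (n - K).choose (s - (m + t)) * (m + t).choose m
        = K.choose (m + t) * (m + t).choose m * (n - K).choose (s - (m + t)) := by ring
      _ = K.choose m * (K - m).choose t * (n - K).choose (s - m - t) := by rw [h1, h2]
      _ = K.choose m * ((K - m).choose t * (n - K).choose (s - m - t)) := by ring

lemma lemA (n K s : ℕ) (hK : K ≤ n) (hs : s ≤ n) (M : ℝ) (hM : 0 ≤ M) :
    (n : ℝ) ^ s * ∑ k ∈ range (s + 1),
        ((K.choose k * (n - K).choose (s - k) : ℕ) : ℝ) * (1 + M) ^ k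
      ≤ (n.choose s : ℝ) * ((n : ℝ) + (K : ℝ) * M) ^ s := by
  have pow_expand : ∀ k ∈ range (s + 1),
      (1 + M) ^ k = ∑ m ∈ range (s + 1), (k.choose m : ℝ) * M ^ m := by
    intro k hk
    simp only [Finset.mem_range] at hk
    rw [add_comm, add_pow]
    simp only [one_pow, mul_one]
    rw [show ∀ (f : ℕ → ℝ), (∑ m ∈ range (k+1), f m) = ∑ m ∈ range (k+1), f m from fun _ => rfl]
    rw [Finset.sum_subset (Finset.range_subset_range.2 (by omega : k + 1 ≤ s + 1))]
    · exact Finset.sum_congr rfl fun m _ => by ring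
    · intro m _ hm
      simp only [Finset.mem_range] at hm
      rw [Nat.choose_eq_zero_of_lt (by omega)]
      simp
  calc (n : ℝ) ^ s * ∑ k ∈ range (s + 1),
        ((K.choose k * (n - K).choose (s - k) : ℕ) : ℝ) * (1 + M) ^ k
      = ∑ m ∈ range (s + 1),
          ((n : ℝ) ^ s * ((K.choose m * (n - m).choose (s - m) : ℕ) : ℝ)) * M ^ m := by
        rw [Finset.mul_sum]
        calc ∑ k ∈ range (s + 1),
              (n:ℝ) ^ s * (((K.choose k * (n - K).choose (s - k) : ℕ) : ℝ) * (1 + M) ^ k)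
            = ∑ k ∈ range (s + 1), ∑ m ∈ range (s + 1),
                (n:ℝ) ^ s * (((K.choose k * (n - K).choose (s - k) * k.choose m : ℕ) : ℝ) * M ^ m) := by
              apply Finset.sum_congr rfl
              intro k hk
              rw [pow_expand k hk, Finset.mul_sum, Finset.mul_sum]
              apply Finset.sum_congr rfl
              intro m _
              push_cast
              ring
          _ = ∑ m ∈ range (s + 1), ∑ k ∈ range (s + 1),
                (n:ℝ) ^ s * (((K.choose k * (n - K).choose (s - k) * k.choose m : ℕ) : ℝ) * M ^ m) :=
              Finset.sum_comm
          _ = ∑ m ∈ range (s + 1),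
                ((n:ℝ) ^ s * ((K.choose m * (n - m).choose (s - m) : ℕ) : ℝ)) * M ^ m := by
              apply Finset.sum_congr rfl
              intro m hm
              simp only [Finset.mem_range] at hm
              rw [← sum_identity n K s m hK (by omega)]
              push_cast
              rw [Finset.mul_sum, Finset.sum_mul]
              apply Finset.sum_congr rfl
              intro k _
              ring
    _ ≤ ∑ m ∈ range (s + 1),
          ((n.choose s : ℝ) * ((s.choose m * (K ^ m * n ^ (s - m)) : ℕ) : ℝ)) * M ^ m := by
        apply Finset.sum_le_sum
        intro m hm
        simp only [Finset.mem_range] at hm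
        have := coeff_ineq n K s m hK (by omega) hs
        have h2 : (↑(n ^ s * (K.choose m * (n - m).choose (s - m))) : ℝ)
            ≤ (↑(n.choose s * (s.choose m * (K ^ m * n ^ (s - m)))) : ℝ) := by exact_mod_cast this
        push_cast at h2 ⊢
        exact mul_le_mul_of_nonneg_right h2 (pow_nonneg hM m)
    _ = (n.choose s : ℝ) * ((n : ℝ) + (K : ℝ) * M) ^ s := by
        rw [add_comm ((n:ℝ)) _, add_pow, Finset.mul_sum]
        apply Finset.sum_congr rfl
        intro m hm
        push_cast
        ring

lemma bernoulli_mgf (p t : ℝ) (hp0 : 0 ≤ p) (hp1 : p ≤ 1) (ht : 0 ≤ t) :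
    1 - p + p * Real.exp t ≤ Real.exp (t * p + t ^ 2 / 8) := by
  obtain ⟨q, hq⟩ : ∃ q : ℝ, q = 1 - p := ⟨_, rfl⟩
  have hq0 : 0 ≤ q := by rw [hq]; linarith
  obtain ⟨D, hD⟩ : ∃ D : ℝ → ℝ, D = fun x => q + p * Real.exp x := ⟨_, rfl⟩
  have hDx : ∀ x, D x = q + p * Real.exp x := fun x => by rw [hD]
  have hDpos : ∀ x, 0 < D x := by
    intro x
    rw [hDx]
    rcases eq_or_lt_of_le hp0 with h | h
    · rw [hq, ← h]; norm_num
    · have : 0 < p * Real.exp x := by positivity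
      linarith
  have hDd : ∀ x, HasDerivAt D (p * Real.exp x) x := by
    intro x
    rw [hD]
    simpa using ((Real.hasDerivAt_exp x).const_mul p).const_add q
  obtain ⟨f, hf⟩ : ∃ f : ℝ → ℝ, f = fun x => x * p + x ^ 2 / 8 - Real.log (D x) := ⟨_, rfl⟩
  obtain ⟨f₁, hf₁⟩ : ∃ f₁ : ℝ → ℝ, f₁ = fun x => p + x / 4 - p * Real.exp x / D x := ⟨_, rfl⟩
  have hf₁x : ∀ x, f₁ x = p + x / 4 - p * Real.exp x / D x := fun x => by rw [hf₁]
  have hfd : ∀ x, HasDerivAt f (f₁ x) x := by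
    intro x
    rw [hf, hf₁]
    have h1 : HasDerivAt (fun x : ℝ => x * p + x ^ 2 / 8) (p + x / 4) x := by
      have := ((hasDerivAt_id x).mul_const p).add (((hasDerivAt_pow 2 x)).div_const 8)
      exact this.congr_deriv (by norm_num; ring)
    have h2 : HasDerivAt (fun x => Real.log (D x)) (p * Real.exp x / D x) x :=
      (hDd x).log (ne_of_gt (hDpos x))
    exact h1.sub h2
  have hf₁d : ∀ x, HasDerivAt f₁
      (1 / 4 - (p * Real.exp x * D x - p * Real.exp x * (p * Real.exp x)) / (D x) ^ 2) x := by
    intro x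
    rw [hf₁]
    have h1 : HasDerivAt (fun x : ℝ => p + x / 4) (1 / 4) x := by
      simpa using (hasDerivAt_id x).div_const 4 |>.const_add p
    have h2 : HasDerivAt (fun x => p * Real.exp x / D x)
        ((p * Real.exp x * D x - p * Real.exp x * (p * Real.exp x)) / (D x) ^ 2) x :=
      ((Real.hasDerivAt_exp x).const_mul p).div (hDd x) (ne_of_gt (hDpos x))
    exact h1.sub h2
  have hf₂nonneg : ∀ x,
      0 ≤ 1 / 4 - (p * Real.exp x * D x - p * Real.exp x * (p * Real.exp x)) / (D x) ^ 2 := by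
    intro x
    rw [sub_nonneg, div_le_iff₀ (pow_pos (hDpos x) 2)]
    have key : 4 * (q * (p * Real.exp x)) ≤ (q + p * Real.exp x) ^ 2 := by
      nlinarith [sq_nonneg (q - p * Real.exp x)]
    have expand : p * Real.exp x * (q + p * Real.exp x) - p * Real.exp x * (p * Real.exp x)
        = q * (p * Real.exp x) := by ring
    rw [hDx, expand]
    linarith [key]
  have hf₁mono : Monotone f₁ := by
    apply monotone_of_deriv_nonneg
    · exact fun x => (hf₁d x).differentiableAt
    · intro x
      rw [(hf₁d x).deriv]
      exact hf₂nonneg x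
  have hD0 : D 0 = 1 := by rw [hDx, Real.exp_zero, hq]; ring
  have hf₁zero : f₁ 0 = 0 := by
    rw [hf₁x, Real.exp_zero, hD0]
    ring
  have hf₁nonneg : ∀ x, 0 ≤ x → 0 ≤ f₁ x := by
    intro x hx
    rw [← hf₁zero]
    exact hf₁mono hx
  have hfmono : MonotoneOn f (Set.Ici 0) := by
    apply monotoneOn_of_deriv_nonneg (convex_Ici 0)
    · exact Continuous.continuousOn (by
        have : Differentiable ℝ f := fun x => (hfd x).differentiableAt
        exact this.continuous)
    · intro x _
      exact (hfd x).differentiableAt.differentiableWithinAt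
    · intro x hx
      rw [interior_Ici] at hx
      rw [(hfd x).deriv]
      exact hf₁nonneg x (le_of_lt hx)
  have hfzero : f 0 = 0 := by
    rw [hf]
    simp [hD0]
  have hft : 0 ≤ f t := by
    rw [← hfzero]
    exact hfmono (Set.mem_Ici.2 le_rfl) (Set.mem_Ici.2 ht) ht
  have hlog : Real.log (D t) ≤ t * p + t ^ 2 / 8 := by
    rw [hf] at hft
    simp only at hft
    linarith
  calc 1 - p + p * Real.exp t = D t := by rw [hDx, hq]
    _ ≤ Real.exp (t * p + t ^ 2 / 8) := by
        rw [← Real.exp_log (hDpos t)]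
        exact Real.exp_le_exp.2 hlog

lemma lemB (n K s a : ℕ) (hK : K ≤ n) (hs1 : 1 ≤ s) (hs : s ≤ n) (g : ℝ) (hg : 0 ≤ g)
    (hmean : (s : ℝ) * K / n + g ≤ a) :
    (∑ k ∈ Finset.Icc a s, ((K.choose k * (n - K).choose (s - k) : ℕ) : ℝ))
      ≤ (n.choose s : ℝ) * Real.exp (-2 * g ^ 2 / s) := by
  have hn : 0 < n := lt_of_lt_of_le hs1 hs
  have hnR : (0 : ℝ) < n := by exact_mod_cast hn
  have hsR : (0 : ℝ) < s := by exact_mod_cast hs1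
  obtain ⟨l, hl⟩ : ∃ l : ℝ, l = 4 * g / s := ⟨_, rfl⟩
  have hl0 : 0 ≤ l := by rw [hl]; positivity
  obtain ⟨y, hy⟩ : ∃ y : ℝ, y = Real.exp l := ⟨_, rfl⟩
  have hy1 : 1 ≤ y := by rw [hy]; exact Real.one_le_exp hl0
  have hy0 : 0 < y := lt_of_lt_of_le one_pos hy1
  obtain ⟨M, hM⟩ : ∃ M : ℝ, M = y - 1 := ⟨_, rfl⟩
  have hM0 : 0 ≤ M := by rw [hM]; linarith
  have h1M : 1 + M = y := by rw [hM]; ring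
  obtain ⟨p, hp⟩ : ∃ p : ℝ, p = (K : ℝ) / n := ⟨_, rfl⟩
  have hp0 : 0 ≤ p := by rw [hp]; positivity
  have hp1 : p ≤ 1 := by
    rw [hp, div_le_one hnR]
    exact_mod_cast hK
  have hcnonneg : ∀ k, (0:ℝ) ≤ ((K.choose k * (n - K).choose (s - k) : ℕ) : ℝ) := by
    intro k; positivity
  have step1 : (∑ k ∈ Finset.Icc a s, ((K.choose k * (n - K).choose (s - k) : ℕ) : ℝ)) * y ^ a
      ≤ ∑ k ∈ range (s + 1), ((K.choose k * (n - K).choose (s - k) : ℕ) : ℝ) * y ^ k := by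
    rw [Finset.sum_mul]
    calc ∑ k ∈ Finset.Icc a s, ((K.choose k * (n - K).choose (s - k) : ℕ) : ℝ) * y ^ a
        ≤ ∑ k ∈ Finset.Icc a s, ((K.choose k * (n - K).choose (s - k) : ℕ) : ℝ) * y ^ k := by
          apply Finset.sum_le_sum
          intro k hk
          simp only [Finset.mem_Icc] at hk
          exact mul_le_mul_of_nonneg_left (pow_le_pow_right₀ hy1 hk.1) (hcnonneg k)
      _ ≤ ∑ k ∈ range (s + 1), ((K.choose k * (n - K).choose (s - k) : ℕ) : ℝ) * y ^ k := by
          apply Finset.sum_le_sum_of_subset_of_nonneg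
          · intro k hk
            simp only [Finset.mem_Icc, Finset.mem_range] at *
            omega
          · intro k _ _
            have := hcnonneg k
            positivity
  have step2 : ∑ k ∈ range (s + 1), ((K.choose k * (n - K).choose (s - k) : ℕ) : ℝ) * y ^ k
      ≤ (n.choose s : ℝ) * (1 - p + p * y) ^ s := by
    have hA := lemA n K s hK hs M hM0
    rw [h1M] at hA
    have hfact : (n : ℝ) + (K : ℝ) * M = (n : ℝ) * (1 - p + p * y) := by
      rw [hp, hM]
      field_simp
      ring
    rw [hfact, mul_pow] at hA
    have := pow_pos hnR s
    calc ∑ k ∈ range (s + 1), ((K.choose k * (n - K).choose (s - k) : ℕ) : ℝ) * y ^ k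
        = ((n:ℝ) ^ s * ∑ k ∈ range (s + 1),
            ((K.choose k * (n - K).choose (s - k) : ℕ) : ℝ) * y ^ k) / (n:ℝ) ^ s := by
          field_simp
      _ ≤ ((n.choose s : ℝ) * ((n:ℝ) ^ s * (1 - p + p * y) ^ s)) / (n:ℝ) ^ s := by
          gcongr
      _ = (n.choose s : ℝ) * (1 - p + p * y) ^ s := by
          field_simp
  have step3 : (1 - p + p * y) ^ s ≤ Real.exp ((s : ℝ) * (l * p + l ^ 2 / 8)) := by
    have hb := bernoulli_mgf p l hp0 hp1 hl0
    rw [← hy] at hb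
    have h0 : 0 ≤ 1 - p + p * y := by nlinarith
    calc (1 - p + p * y) ^ s ≤ (Real.exp (l * p + l ^ 2 / 8)) ^ s := pow_le_pow_left₀ h0 hb s
      _ = Real.exp ((s : ℝ) * (l * p + l ^ 2 / 8)) := by rw [← Real.exp_nat_mul]
  have combined : (∑ k ∈ Finset.Icc a s, ((K.choose k * (n - K).choose (s - k) : ℕ) : ℝ)) * y ^ a
      ≤ (n.choose s : ℝ) * Real.exp ((s : ℝ) * (l * p + l ^ 2 / 8)) := by
    refine step1.trans (step2.trans ?_)
    exact mul_le_mul_of_nonneg_left step3 (Nat.cast_nonneg _)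
  have hya : y ^ a = Real.exp ((a : ℝ) * l) := by
    rw [hy, ← Real.exp_nat_mul]
  have final : (∑ k ∈ Finset.Icc a s, ((K.choose k * (n - K).choose (s - k) : ℕ) : ℝ))
      ≤ (n.choose s : ℝ) * Real.exp ((s : ℝ) * (l * p + l ^ 2 / 8) - (a : ℝ) * l) := by
    rw [Real.exp_sub, ← hya, ← mul_div_assoc]
    rw [le_div_iff₀ (by positivity : (0:ℝ) < y ^ a)]
    exact combined
  refine final.trans ?_
  apply mul_le_mul_of_nonneg_left _ (Nat.cast_nonneg _)
  apply Real.exp_le_exp.2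
  have hsp : (s : ℝ) * K / n = (s : ℝ) * p := by rw [hp]; ring
  rw [hsp] at hmean
  have hal : ((s : ℝ) * p + g) * l ≤ (a : ℝ) * l := mul_le_mul_of_nonneg_right (by linarith) hl0
  have hexp : (s : ℝ) * (l * p + l ^ 2 / 8) - ((s : ℝ) * p + g) * l = (s:ℝ) * l ^ 2 / 8 - g * l := by
    ring
  have hval : (s:ℝ) * l ^ 2 / 8 - g * l = -2 * g ^ 2 / s := by
    rw [hl]
    field_simp
    ring
  linarith

lemma count_lemma (n s a : ℕ) (T : Finset (Fin n)) :
    (Finset.univ.filter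
        (fun A : Finset (Fin n) => A.card = s ∧ a ≤ (A ∩ T).card)).card
      ≤ ∑ k ∈ Finset.Icc a s, T.card.choose k * (n - T.card).choose (s - k) := by
  have hsub : Finset.univ.filter
        (fun A : Finset (Fin n) => A.card = s ∧ a ≤ (A ∩ T).card)
      ⊆ (Finset.Icc a s).biUnion
          (fun k => Finset.univ.filter
            (fun A : Finset (Fin n) => A.card = s ∧ (A ∩ T).card = k)) := by
    intro A hA
    simp only [Finset.mem_filter, Finset.mem_biUnion, Finset.mem_Icc, Finset.mem_univ,
      true_and] at *
    exact ⟨(A ∩ T).card, ⟨hA.2, hA.1 ▸ Finset.card_le_card (Finset.inter_subset_left)⟩,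
      hA.1, rfl⟩
  calc (Finset.univ.filter
        (fun A : Finset (Fin n) => A.card = s ∧ a ≤ (A ∩ T).card)).card
      ≤ ((Finset.Icc a s).biUnion
          (fun k => Finset.univ.filter
            (fun A : Finset (Fin n) => A.card = s ∧ (A ∩ T).card = k))).card :=
        Finset.card_le_card hsub
    _ ≤ ∑ k ∈ Finset.Icc a s, (Finset.univ.filter
            (fun A : Finset (Fin n) => A.card = s ∧ (A ∩ T).card = k)).card :=
        Finset.card_biUnion_le
    _ ≤ ∑ k ∈ Finset.Icc a s, T.card.choose k * (n - T.card).choose (s - k) := by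
        apply Finset.sum_le_sum
        intro k _
        have hinj : ∀ A ∈ Finset.univ.filter
            (fun A : Finset (Fin n) => A.card = s ∧ (A ∩ T).card = k),
            (A ∩ T, A \ T) ∈ (T.powersetCard k) ×ˢ (Tᶜ.powersetCard (s - k)) := by
          intro A hA
          simp only [Finset.mem_filter, Finset.mem_univ, true_and] at hA
          obtain ⟨hcard, hk⟩ := hA
          simp only [Finset.mem_product, Finset.mem_powersetCard]
          refine ⟨⟨Finset.inter_subset_right, hk⟩, ?_, ?_⟩
          · intro t ht
            simp only [Finset.mem_sdiff] at ht
            simp [Finset.mem_compl, ht.2]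
          · have := Finset.card_sdiff_add_card_inter A T
            omega
        have hcard := Finset.card_le_card_of_injOn _ hinj ?_
        · refine hcard.trans ?_
          rw [Finset.card_product, Finset.card_powersetCard, Finset.card_powersetCard,
            Finset.card_compl]
          simp [Fintype.card_fin]
        · intro A hA B hB hEq
          simp only [Prod.mk.injEq] at hEq
          have : A \ T ∪ A ∩ T = B \ T ∪ B ∩ T := by rw [hEq.1, hEq.2]
          rwa [Finset.sdiff_union_inter, Finset.sdiff_union_inter] at this

lemma sort_map {n : ℕ} (A : Finset (Fin n)) (x : Fin n → ℝ) (hx : Monotone x) :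
    (A.val.map x).sort (· ≤ ·) = (A.sort (· ≤ ·)).map x := by
  refine (fun hp h1 h2 => List.Perm.eq_of_pairwise' (r := fun a b : ℝ => a ≤ b) h1 h2 hp) ?_ ?_ ?_
  · apply Multiset.coe_eq_coe.mp
    rw [Multiset.sort_eq]
    have : ((A.sort (· ≤ ·) : List (Fin n)) : Multiset (Fin n)) = A.val := Finset.sort_eq _ _
    rw [← this, Multiset.map_coe]
  · exact Multiset.pairwise_sort _ _
  · exact List.Pairwise.map x (fun a b h => hx h) (Finset.pairwise_sort _ _)

lemma kthSmallest_eq {n s : ℕ} (A : Finset (Fin n)) (hA : A.card = s) (x : Fin n → ℝ)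
    (hx : Monotone x) (i : ℕ) (hi1 : 1 ≤ i) (his : i ≤ s) :
    kthSmallest (A.val.map x) i = x (A.orderEmbOfFin hA ⟨i - 1, by omega⟩) := by
  unfold kthSmallest
  rw [sort_map A x hx]
  have hlen : ((A.sort (· ≤ ·)).map x).length = s := by
    rw [List.length_map, Finset.length_sort, hA]
  rw [List.getD_eq_getElem _ _ (by rw [hlen]; omega), List.getElem_map,
    Finset.orderEmbOfFin_apply]
  simp [Fin.getElem_fin]

lemma univ_orderEmbOfFin {n : ℕ} (q : Fin n) :
    (Finset.univ : Finset (Fin n)).orderEmbOfFin (Finset.card_fin n) q = q := by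
  have : (fun i : Fin n => i) = ⇑((Finset.univ : Finset (Fin n)).orderEmbOfFin
      (Finset.card_fin n)) := by
    apply Finset.orderEmbOfFin_unique (Finset.card_fin n)
    · intro i; exact Finset.mem_univ i
    · exact strictMono_id
  exact (congrFun this q).symm

lemma count_bound {n s : ℕ} (A : Finset (Fin n)) (hA : A.card = s) (x : Fin n → ℝ)
    (hx : Monotone x) (i j : ℕ) (hi1 : 1 ≤ i) (his : i ≤ s) (hj1 : 1 ≤ j) (hjn : j ≤ n)
    (h : kthSmallest ((Finset.univ : Finset (Fin n)).val.map x) j < kthSmallest (A.val.map x) i) :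
    s - (i - 1) ≤ (A ∩ (Finset.univ.filter (fun t : Fin n => j ≤ (t : ℕ)))).card := by
  have hn1 : 1 ≤ n := le_trans hj1 hjn
  have hxj : kthSmallest ((Finset.univ : Finset (Fin n)).val.map x) j = x ⟨j - 1, by omega⟩ := by
    rw [kthSmallest_eq Finset.univ (Finset.card_fin n) x hx j hj1 hjn, univ_orderEmbOfFin]
  have hxi := kthSmallest_eq A hA x hx i hi1 his
  rw [hxj, hxi] at h
  set e := A.orderEmbOfFin hA with he
  -- map Ici ⟨i-1⟩ into A ∩ T via e
  have key : ∀ q : Fin s, (i - 1 : ℕ) ≤ (q : ℕ) →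
      e q ∈ A ∩ (Finset.univ.filter (fun t : Fin n => j ≤ (t : ℕ))) := by
    intro q hq
    rw [Finset.mem_inter]
    refine ⟨Finset.orderEmbOfFin_mem A hA q, ?_⟩
    simp only [Finset.mem_filter, Finset.mem_univ, true_and]
    have h1 : e ⟨i - 1, by omega⟩ ≤ e q := e.monotone (by simpa [Fin.le_def] using hq)
    have h2 : x (⟨j - 1, by omega⟩ : Fin n) < x (e q) := lt_of_lt_of_le h (hx h1)
    by_contra hcon
    push_neg at hcon
    have : (e q) ≤ (⟨j - 1, by omega⟩ : Fin n) := by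
      rw [Fin.le_def]; simp; omega
    exact absurd (hx this) (not_le.2 h2)
  have hinj : Set.InjOn (fun q => e q)
      ((Finset.univ.filter (fun q : Fin s => (i - 1 : ℕ) ≤ (q : ℕ))) : Set (Fin s)) :=
    fun a _ b _ hab => e.injective hab
  have hcard := Finset.card_le_card_of_injOn (fun q => e q)
    (fun q hq => key q (by simpa using (Finset.mem_filter.mp hq).2)) hinj
  refine le_trans ?_ hcard
  have : (Finset.univ.filter (fun q : Fin s => (i - 1 : ℕ) ≤ (q : ℕ)))
      = Finset.Ici (⟨i - 1, by omega⟩ : Fin s) := by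
    ext q
    simp [Fin.le_def]
  rw [this, Fin.card_Ici]

/-- Sampling deviation lemma, part (b): with `x` the sorted input of size `n`
and `S` a uniformly random `s`-element subset of the index set, if
`ī ≤ ⌈κs⌉` then `P[x*_{j̄ᵣ} < y*_ī] ≤ exp (-2g²/s)`. -/
theorem rank_lemma_b
    (n s : ℕ) (hs : 1 ≤ s) (hsn : s ≤ n)
    (κ g : ℝ) (hg : 0 ≤ g) (hκ1 : -g < κ * s) (hκ2 : κ * s ≤ s + g)
    (x : Fin n → ℝ) (hx : Monotone x)
    {Ω : Type*} [MeasurableSpace Ω] (μ : Measure Ω) [IsProbabilityMeasure μ]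
    (S : Ω → Finset (Fin n)) (hScard : ∀ ω, (S ω).card = s)
    (hunif : ∀ A : Finset (Fin n), A.card = s →
      μ {ω | S ω = A} = 1 / (n.choose s))
    (ibar : ℤ) (hibar : ibar = max 1 (min ⌈κ * s⌉ (s : ℤ)))
    (jr : ℤ) (hjr : jr = min ⌈κ * n + g * n / s⌉ (n : ℤ))
    (hle : ibar ≤ ⌈κ * s⌉) :
    μ {ω | kthSmallest ((Finset.univ : Finset (Fin n)).val.map x) jr.toNat <
           kthSmallest ((S ω).val.map x) ibar.toNat} ≤
      ENNReal.ofReal (Real.exp (-2 * g ^ 2 / s)) := by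
  have hn : 1 ≤ n := le_trans hs hsn
  have hnR : (0 : ℝ) < n := by exact_mod_cast hn
  have hsR : (0 : ℝ) < s := by exact_mod_cast hs
  -- ibar facts
  have hibar1 : 1 ≤ ibar := hibar ▸ le_max_left _ _
  have hibars : ibar ≤ (s : ℤ) := by
    rw [hibar]
    exact max_le (by exact_mod_cast hs) (min_le_right _ _)
  set i : ℕ := ibar.toNat with hidef
  have hi1 : 1 ≤ i := by omega
  have his : i ≤ s := by omega
  have hieq : ((i : ℕ) : ℝ) = ((ibar : ℤ) : ℝ) := by
    rw [hidef]
    exact_mod_cast congrArg (Int.cast : ℤ → ℝ) (Int.toNat_of_nonneg (by omega : (0:ℤ) ≤ ibar))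
  have hICeil : (i : ℝ) - 1 < κ * s := by
    have h1 : ibar - 1 < ⌈κ * s⌉ := by omega
    have h2 := Int.lt_ceil.mp h1
    push_cast at h2
    linarith
  -- jr facts
  have hposc : (0 : ℝ) < κ * n + g * n / s := by
    have he : κ * n + g * n / s = (κ * s + g) * n / s := by field_simp
    rw [he]
    have : 0 < κ * s + g := by linarith
    positivity
  have hjr1 : 1 ≤ jr := by
    have h0 : (0:ℤ) < ⌈κ * n + g * n / s⌉ :=
      Int.lt_ceil.mpr (by exact_mod_cast hposc)
    rw [hjr]
    refine le_min (by omega) (by exact_mod_cast hn)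
  have hjrn : jr ≤ (n : ℤ) := hjr ▸ min_le_right _ _
  set j : ℕ := jr.toNat with hjdef
  have hj1 : 1 ≤ j := by omega
  have hjn : j ≤ n := by omega
  -- the index threshold set
  set T : Finset (Fin n) := Finset.univ.filter (fun t : Fin n => j ≤ (t : ℕ)) with hT
  have hTcard : T.card = n - j := by
    rcases Nat.lt_or_ge j n with hlt | hge
    · have : T = Finset.Ici (⟨j, hlt⟩ : Fin n) := by
        ext t
        simp [hT, Fin.le_def]
      rw [this, Fin.card_Ici]
    · have hjeq : j = n := le_antisymm hjn hge
      have : T = ∅ := by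
        ext t
        simp only [hT, Finset.mem_filter, Finset.mem_univ, true_and, Finset.notMem_empty,
          iff_false, not_le, hjeq]
        exact t.2
      rw [this]
      simp [hjeq]
  set a : ℕ := s - (i - 1) with ha
  have ha1 : 1 ≤ a := by omega
  set badFinset : Finset (Finset (Fin n)) :=
    Finset.univ.filter (fun A : Finset (Fin n) => A.card = s ∧ a ≤ (A ∩ T).card) with hbad
  -- event inclusion
  have hsub : {ω | kthSmallest ((Finset.univ : Finset (Fin n)).val.map x) jr.toNat <
           kthSmallest ((S ω).val.map x) ibar.toNat}
      ⊆ ⋃ A ∈ badFinset, {ω | S ω = A} := by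
    intro ω hω
    simp only [Set.mem_setOf_eq] at hω
    refine Set.mem_iUnion₂.mpr ⟨S ω, ?_, rfl⟩
    rw [hbad, Finset.mem_filter]
    refine ⟨Finset.mem_univ _, hScard ω, ?_⟩
    exact count_bound (S ω) (hScard ω) x hx i j hi1 his hj1 hjn hω
  -- measure bound
  have hmeas : μ {ω | kthSmallest ((Finset.univ : Finset (Fin n)).val.map x) jr.toNat <
           kthSmallest ((S ω).val.map x) ibar.toNat}
      ≤ (badFinset.card : ℝ≥0∞) * (1 / (n.choose s : ℝ≥0∞)) := by
    calc μ _ ≤ μ (⋃ A ∈ badFinset, {ω | S ω = A}) := measure_mono hsub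
      _ ≤ ∑ A ∈ badFinset, μ {ω | S ω = A} := measure_biUnion_finset_le _ _
      _ = ∑ A ∈ badFinset, (1 / (n.choose s : ℝ≥0∞)) := by
          apply Finset.sum_congr rfl
          intro A hA
          rw [hbad, Finset.mem_filter] at hA
          exact hunif A hA.2.1
      _ = (badFinset.card : ℝ≥0∞) * (1 / (n.choose s : ℝ≥0∞)) := by
          rw [Finset.sum_const, nsmul_eq_mul]
  -- real counting bound
  have hreal : (badFinset.card : ℝ) ≤ (n.choose s : ℝ) * Real.exp (-2 * g ^ 2 / s) := by
    have h1 : (badFinset.card : ℝ)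
        ≤ ((∑ k ∈ Finset.Icc a s, T.card.choose k * (n - T.card).choose (s - k) : ℕ) : ℝ) := by
      exact_mod_cast count_lemma n s a T
    rcases Nat.lt_or_ge j n with hlt | hge
    · -- main case: j < n, use lemB
      have hjr_eq : jr = ⌈κ * n + g * n / s⌉ := by
        have hjrlt : jr < (n : ℤ) := by omega
        rw [hjr] at hjrlt ⊢
        omega
      have hjeq2 : ((j : ℕ) : ℝ) = ((jr : ℤ) : ℝ) := by
        rw [hjdef]
        exact_mod_cast congrArg (Int.cast : ℤ → ℝ) (Int.toNat_of_nonneg (by omega : (0:ℤ) ≤ jr))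
      have hjreal : κ * n + g * n / s ≤ (j : ℝ) := by
        have h2 := Int.le_ceil (κ * n + g * n / s)
        rw [← hjr_eq] at h2
        rw [hjeq2]
        exact h2
      have hmean : (s : ℝ) * T.card / n + g ≤ a := by
        rw [hTcard]
        have hc1 : ((n - j : ℕ) : ℝ) = (n : ℝ) - j := by
          rw [Nat.cast_sub hjn]
        have hc2 : ((a : ℕ) : ℝ) = (s : ℝ) - i + 1 := by
          rw [ha, Nat.cast_sub (by omega : i - 1 ≤ s), Nat.cast_sub hi1]
          push_cast
          ring
        rw [hc1, hc2]
        have hgid : g * n / s * s = g * n := div_mul_cancel₀ _ (ne_of_gt hsR)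
        have hkey : κ * s + g ≤ (s : ℝ) * j / n := by
          rw [le_div_iff₀ hnR]
          nlinarith [mul_le_mul_of_nonneg_left hjreal (le_of_lt hsR)]
        have e1 : (s : ℝ) * ((n : ℝ) - j) / n + g = s - s * j / n + g := by
          field_simp
        rw [e1]
        linarith
      have h2 := lemB n T.card s a (by omega) hs hsn g hg hmean
      refine h1.trans ?_
      rw [Nat.cast_sum]
      exact h2
    · -- degenerate case: j = n, T empty, sum is zero
      have hjeq : j = n := le_antisymm hjn hge
      have hT0 : T.card = 0 := by rw [hTcard]; omega
      have hzero : (∑ k ∈ Finset.Icc a s, T.card.choose k * (n - T.card).choose (s - k)) = 0 := by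
        apply Finset.sum_eq_zero
        intro k hk
        simp only [Finset.mem_Icc] at hk
        rw [hT0, Nat.choose_eq_zero_of_lt (by omega : 0 < k)]
        ring
      rw [hzero] at h1
      simp only [Nat.cast_zero] at h1
      refine h1.trans ?_
      positivity
  -- ENNReal conversion
  have hCpos : (0 : ℝ) < (n.choose s : ℝ) := by
    exact_mod_cast Nat.choose_pos hsn
  refine hmeas.trans ?_
  have key : (badFinset.card : ℝ≥0∞) * (1 / (n.choose s : ℝ≥0∞))
      = ENNReal.ofReal ((badFinset.card : ℝ) / (n.choose s : ℝ)) := by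
    rw [ENNReal.ofReal_div_of_pos hCpos, ENNReal.ofReal_natCast, ENNReal.ofReal_natCast,
      one_div, div_eq_mul_inv]
  rw [key]
  apply ENNReal.ofReal_le_ofReal
  rw [div_le_iff₀ hCpos]
  linarith [hreal]
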